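/- For b = 2, α = 1, β = 0, the sum K₁ of reciprocals of positive integers whose binary representation contains exactly one occurrence of the substring '10' equals Σ_{n ≥ 2} Σ_{0 ≤ j₁ < j₂ < n} 1/(2^n − 2^{j₂} + 2^{j₁} − 1). -/

import Mathlib

/-- The binary digits of `n`, leading digit first. -/
def digitsBE (n : ℕ) : List ℕ := (Nat.digits 2 n).reverse

/-- The number of contiguous occurrences of the substring `10` in the binary
representation of `n`. -/
def occCount (n : ℕ) : ℕ :=
  ((digitsBE n).zip (digitsBE n).tail).count (1, 0)

lemma occCount_zero : occCount 0 = 0 := by simp [occCount, digitsBE]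

lemma zip_append_singleton (A : List ℕ) (x : ℕ) :
    (A ++ [x]).zip (A ++ [x]).tail = A.zip A.tail ++ (A.getLast?.map (·, x)).toList := by
  induction A with
  | nil => simp
  | cons a A ih =>
    cases A with
    | nil => simp
    | cons b A' =>
      simp only [List.cons_append, List.tail_cons, List.zip_cons_cons] at *
      rw [ih]
      simp [List.getLast?_cons_cons]

lemma occCount_rec (m : ℕ) :
    occCount m = occCount (m / 2) + if m % 4 = 2 then 1 else 0 := by
  rcases Nat.lt_or_ge m 2 with h | h
  · interval_cases m <;> simp [occCount, digitsBE]
  · have h1 : Nat.digits 2 m = m % 2 :: Nat.digits 2 (m / 2) :=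
      Nat.digits_def' (by norm_num) (by omega)
    have h2 : digitsBE m = digitsBE (m / 2) ++ [m % 2] := by
      simp [digitsBE, h1]
    have h3 : 0 < m / 2 := by omega
    have h4 : Nat.digits 2 (m / 2) = (m / 2) % 2 :: Nat.digits 2 (m / 2 / 2) :=
      Nat.digits_def' (by norm_num) h3
    have h5 : (digitsBE (m / 2)).getLast? = some ((m / 2) % 2) := by
      simp [digitsBE, h4]
    rw [occCount, h2, zip_append_singleton, List.count_append, h5]
    simp only [Option.map_some, Option.toList_some]
    rw [occCount]
    congr 1
    have hrel : m % 4 = 2 * ((m / 2) % 2) + m % 2 := by omega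
    have hb : (m / 2) % 2 = 0 ∨ (m / 2) % 2 = 1 := by omega
    have hc : m % 2 = 0 ∨ m % 2 = 1 := by omega
    rcases hb with hb | hb <;> rcases hc with hc | hc <;>
      simp [hb, hc, List.count_singleton, hrel] <;> omega

lemma occ_pow_sub_one (k : ℕ) : occCount (2 ^ k - 1) = 0 := by
  induction k with
  | zero => simpa using occCount_zero
  | succ k ih =>
    have h2 : (2:ℕ) ^ (k+1) = 2 * 2 ^ k := by ring
    have hp : 1 ≤ (2:ℕ) ^ k := Nat.one_le_two_pow
    rw [occCount_rec]
    have hd : (2 ^ (k+1) - 1) / 2 = 2 ^ k - 1 := by omega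
    have hm : (2 ^ (k+1) - 1) % 4 ≠ 2 := by omega
    simp [hd, hm, ih]

lemma occ_eq_zero {m : ℕ} (h : occCount m = 0) : ∃ k, m = 2 ^ k - 1 := by
  induction m using Nat.strong_induction_on with
  | _ m ih =>
    rcases Nat.eq_zero_or_pos m with rfl | hm
    · exact ⟨0, rfl⟩
    · rw [occCount_rec] at h
      have h4 : m % 4 ≠ 2 := by by_contra hc; simp [hc] at h
      have h0 : occCount (m / 2) = 0 := by omega
      obtain ⟨k, hk⟩ := ih (m / 2) (by omega) h0
      have hp : 1 ≤ (2:ℕ) ^ k := Nat.one_le_two_pow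
      rcases Nat.eq_zero_or_pos k with rfl | hk0
      · have hk' : m / 2 = 0 := by simpa using hk
        refine ⟨1, by norm_num; omega⟩
      · have : (2:ℕ) ^ k = 2 * 2 ^ (k-1) := by
          rw [← pow_succ']; congr 1; omega
        have hp1 : 1 ≤ (2:ℕ) ^ (k-1) := Nat.one_le_two_pow
        refine ⟨k + 1, ?_⟩
        have h2 : (2:ℕ) ^ (k+1) = 2 * 2 ^ k := by ring
        omega

lemma occ_form {n j₁ j₂ : ℕ} (h1 : j₁ < j₂) (h2 : j₂ < n) :
    occCount (2 ^ n - 2 ^ j₂ + 2 ^ j₁ - 1) = 1 := by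
  induction n generalizing j₁ j₂ with
  | zero => omega
  | succ n ih =>
    have hn : (2:ℕ) ^ (n+1) = 2 * 2 ^ n := by ring
    have hp : 1 ≤ (2:ℕ) ^ n := Nat.one_le_two_pow
    rcases Nat.eq_zero_or_pos j₁ with rfl | hj₁
    · rcases Nat.lt_or_ge j₂ 2 with hj | hj
      · -- j₂ = 1
        have hj2' : j₂ = 1 := by omega
        subst hj2'
        have hn1 : 1 ≤ n := by omega
        have h4 : (2:ℕ) ^ (n+1) = 4 * 2 ^ (n-1) := by
          rw [show n + 1 = (n-1) + 2 by omega, pow_succ, pow_succ]; ring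
        have hp1 : 1 ≤ (2:ℕ) ^ (n-1) := Nat.one_le_two_pow
        rw [occCount_rec]
        have hd : (2 ^ (n+1) - 2 ^ 1 + 2 ^ 0 - 1) / 2 = 2 ^ n - 1 := by
          simp only [pow_one, pow_zero]; omega
        have hm : (2 ^ (n+1) - 2 ^ 1 + 2 ^ 0 - 1) % 4 = 2 := by
          simp only [pow_one, pow_zero]; omega
        rw [hd, hm, occ_pow_sub_one]
        norm_num
      · -- j₁ = 0, j₂ ≥ 2
        have hj2n : j₂ ≤ n := by omega
        have hb : (2:ℕ) ^ j₂ = 2 * 2 ^ (j₂ - 1) := by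
          rw [← pow_succ']; congr 1; omega
        have hb4 : (2:ℕ) ^ j₂ = 4 * 2 ^ (j₂ - 2) := by
          conv_lhs => rw [show j₂ = (j₂-2) + 2 by omega]
          rw [pow_add]; ring
        have h4 : (2:ℕ) ^ (n+1) = 4 * 2 ^ (n-1) := by
          rw [show n + 1 = (n-1) + 2 by omega, pow_succ, pow_succ]; ring
        have hle : (2:ℕ) ^ (j₂ - 1) ≤ 2 ^ n := Nat.pow_le_pow_right (by norm_num) (by omega)
        have hp1 : 1 ≤ (2:ℕ) ^ (j₂ - 1) := Nat.one_le_two_pow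
        rw [occCount_rec]
        have hd : (2 ^ (n+1) - 2 ^ j₂ + 2 ^ 0 - 1) / 2 = 2 ^ n - 2 ^ (j₂-1) + 2 ^ 0 - 1 := by
          simp only [pow_zero]; omega
        have hm : (2 ^ (n+1) - 2 ^ j₂ + 2 ^ 0 - 1) % 4 ≠ 2 := by
          simp only [pow_zero]; omega
        rw [hd, if_neg hm, ih (by omega) (by omega)]
    · -- j₁ ≥ 1
      have hb : (2:ℕ) ^ j₂ = 2 * 2 ^ (j₂ - 1) := by
        rw [← pow_succ']; congr 1; omega
      have hc : (2:ℕ) ^ j₁ = 2 * 2 ^ (j₁ - 1) := by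
        rw [← pow_succ']; congr 1; omega
      have h1' : (2:ℕ) ^ (j₁-1) < 2 ^ (j₂-1) := Nat.pow_lt_pow_right (by norm_num) (by omega)
      have h2' : (2:ℕ) ^ (j₂-1) < 2 ^ n := Nat.pow_lt_pow_right (by norm_num) (by omega)
      have hp1 : 1 ≤ (2:ℕ) ^ (j₁ - 1) := Nat.one_le_two_pow
      rw [occCount_rec]
      have hd : (2 ^ (n+1) - 2 ^ j₂ + 2 ^ j₁ - 1) / 2 = 2 ^ n - 2 ^ (j₂-1) + 2 ^ (j₁-1) - 1 := by
        omega
      have hm : (2 ^ (n+1) - 2 ^ j₂ + 2 ^ j₁ - 1) % 4 ≠ 2 := by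
        omega
      rw [hd, if_neg hm, ih (by omega) (by omega)]

lemma occ_one {m : ℕ} (h : occCount m = 1) :
    ∃ n j₁ j₂, j₁ < j₂ ∧ j₂ < n ∧ m = 2 ^ n - 2 ^ j₂ + 2 ^ j₁ - 1 := by
  induction m using Nat.strong_induction_on with
  | _ m ih =>
    have hm : 0 < m := by
      rcases Nat.eq_zero_or_pos m with rfl | h'
      · rw [occCount_zero] at h; omega
      · exact h'
    rw [occCount_rec] at h
    by_cases h4 : m % 4 = 2
    · rw [if_pos h4] at h
      obtain ⟨k, hk⟩ := occ_eq_zero (by omega : occCount (m / 2) = 0)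
      have hp : 1 ≤ (2:ℕ) ^ k := Nat.one_le_two_pow
      have hk1 : 1 ≤ k := by
        rcases Nat.eq_zero_or_pos k with rfl | h' 
        · simp at hk; omega
        · exact h'
      refine ⟨k + 1, 0, 1, by omega, by omega, ?_⟩
      have h2 : (2:ℕ) ^ (k+1) = 2 * 2 ^ k := by ring
      simp only [pow_one, pow_zero]
      omega
    · rw [if_neg h4] at h
      have hm2 : m / 2 < m := by omega
      obtain ⟨n, j₁, j₂, hj, hjn, hf⟩ := ih (m / 2) hm2 h
      have hC : 1 ≤ (2:ℕ) ^ j₁ := Nat.one_le_two_pow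
      have hCB : (2:ℕ) ^ j₁ < 2 ^ j₂ := Nat.pow_lt_pow_right (by norm_num) hj
      have hBA : (2:ℕ) ^ j₂ < 2 ^ n := Nat.pow_lt_pow_right (by norm_num) hjn
      have hn2 : (2:ℕ) ^ (n+1) = 2 * 2 ^ n := by ring
      have hb2 : (2:ℕ) ^ (j₂+1) = 2 * 2 ^ j₂ := by ring
      have hc2 : (2:ℕ) ^ (j₁+1) = 2 * 2 ^ j₁ := by ring
      rcases Nat.even_or_odd m with he | ho
      · -- m even, m % 4 = 0, so m/2 even, forces j₁ = 0
        have he2 : m % 2 = 0 := by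
          rcases he with ⟨r, hr⟩; omega
        have h40 : m % 4 = 0 := by omega
        have hhalf_even : (m / 2) % 2 = 0 := by omega
        have hj10 : j₁ = 0 := by
          by_contra hj1
          have : (2:ℕ) ^ j₁ = 2 * 2 ^ (j₁ - 1) := by
            rw [← pow_succ']; congr 1; omega
          have hb' : (2:ℕ) ^ j₂ = 2 * 2 ^ (j₂ - 1) := by
            rw [← pow_succ']; congr 1; omega
          have ha' : (2:ℕ) ^ n = 2 * 2 ^ (n - 1) := by
            rw [← pow_succ']; congr 1; omega
          omega
        subst hj10
        refine ⟨n + 1, 0, j₂ + 1, by omega, by omega, ?_⟩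
        simp only [pow_zero] at hf ⊢
        omega
      · have ho2 : m % 2 = 1 := by
          rcases ho with ⟨r, hr⟩; omega
        refine ⟨n + 1, j₁ + 1, j₂ + 1, by omega, by omega, ?_⟩
        omega

lemma pow_inj_aux {j₁ j₂ k₁ k₂ : ℕ} (h1 : j₁ < j₂) (h2 : k₁ < k₂)
    (h : 2 ^ j₂ + 2 ^ k₁ = 2 ^ k₂ + 2 ^ j₁) : j₁ = k₁ ∧ j₂ = k₂ := by
  have key : j₁ = k₁ := by
    rcases Nat.lt_trichotomy j₁ k₁ with hlt | heq | hgt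
    · exfalso
      have d1 : (2:ℕ) ^ (j₁+1) ∣ 2 ^ j₂ := pow_dvd_pow 2 (by omega)
      have d2 : (2:ℕ) ^ (j₁+1) ∣ 2 ^ k₁ := pow_dvd_pow 2 (by omega)
      have d3 : (2:ℕ) ^ (j₁+1) ∣ 2 ^ k₂ := pow_dvd_pow 2 (by omega)
      have d4 : (2:ℕ) ^ (j₁+1) ∣ 2 ^ j₁ := by
        have : (2:ℕ) ^ j₁ = 2 ^ j₂ + 2 ^ k₁ - 2 ^ k₂ := by omega
        rw [this]
        exact Nat.dvd_sub (Nat.dvd_add d1 d2) d3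
      have := Nat.le_of_dvd (Nat.pow_pos (by norm_num)) d4
      have := Nat.pow_lt_pow_right (by norm_num : 1 < 2) (Nat.lt_succ_self j₁)
      omega
    · exact heq
    · exfalso
      have d1 : (2:ℕ) ^ (k₁+1) ∣ 2 ^ k₂ := pow_dvd_pow 2 (by omega)
      have d2 : (2:ℕ) ^ (k₁+1) ∣ 2 ^ j₁ := pow_dvd_pow 2 (by omega)
      have d3 : (2:ℕ) ^ (k₁+1) ∣ 2 ^ j₂ := pow_dvd_pow 2 (by omega)
      have d4 : (2:ℕ) ^ (k₁+1) ∣ 2 ^ k₁ := by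
        have : (2:ℕ) ^ k₁ = 2 ^ k₂ + 2 ^ j₁ - 2 ^ j₂ := by omega
        rw [this]
        exact Nat.dvd_sub (Nat.dvd_add d1 d2) d3
      have := Nat.le_of_dvd (Nat.pow_pos (by norm_num)) d4
      have := Nat.pow_lt_pow_right (by norm_num : 1 < 2) (Nat.lt_succ_self k₁)
      omega
  refine ⟨key, ?_⟩
  subst key
  have : (2:ℕ) ^ j₂ = 2 ^ k₂ := by omega
  exact Nat.pow_right_injective (by norm_num) this

lemma form_pos {n j₁ j₂ : ℕ} (h1 : j₁ < j₂) (h2 : j₂ < n) :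
    0 < 2 ^ n - 2 ^ j₂ + 2 ^ j₁ - 1 := by
  have hC : 1 ≤ (2:ℕ) ^ j₁ := Nat.one_le_two_pow
  have hCB : (2:ℕ) ^ j₁ < 2 ^ j₂ := Nat.pow_lt_pow_right (by norm_num) h1
  have hBA : (2:ℕ) ^ j₂ < 2 ^ n := Nat.pow_lt_pow_right (by norm_num) h2
  omega

lemma form_inj {n j₁ j₂ n' k₁ k₂ : ℕ} (hj : j₁ < j₂) (hjn : j₂ < n)
    (hk : k₁ < k₂) (hkn : k₂ < n')
    (h : 2 ^ n - 2 ^ j₂ + 2 ^ j₁ - 1 = 2 ^ n' - 2 ^ k₂ + 2 ^ k₁ - 1) :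
    n = n' ∧ j₁ = k₁ ∧ j₂ = k₂ := by
  have hC : 1 ≤ (2:ℕ) ^ j₁ := Nat.one_le_two_pow
  have hCB : (2:ℕ) ^ j₁ < 2 ^ j₂ := Nat.pow_lt_pow_right (by norm_num) hj
  have hBA : (2:ℕ) ^ j₂ < 2 ^ n := Nat.pow_lt_pow_right (by norm_num) hjn
  have hC' : 1 ≤ (2:ℕ) ^ k₁ := Nat.one_le_two_pow
  have hCB' : (2:ℕ) ^ k₁ < 2 ^ k₂ := Nat.pow_lt_pow_right (by norm_num) hk
  have hBA' : (2:ℕ) ^ k₂ < 2 ^ n' := Nat.pow_lt_pow_right (by norm_num) hkn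
  have hn2 : (2:ℕ) ^ n = 2 * 2 ^ (n-1) := by rw [← pow_succ']; congr 1; omega
  have hn2' : (2:ℕ) ^ n' = 2 * 2 ^ (n'-1) := by rw [← pow_succ']; congr 1; omega
  have hB1 : (2:ℕ) ^ j₂ ≤ 2 ^ (n-1) := Nat.pow_le_pow_right (by norm_num) (by omega)
  have hB1' : (2:ℕ) ^ k₂ ≤ 2 ^ (n'-1) := Nat.pow_le_pow_right (by norm_num) (by omega)
  have hnn : n = n' := by
    rcases Nat.lt_trichotomy n n' with hlt | heq | hgt
    · exfalso
      have : (2:ℕ) ^ n ≤ 2 ^ (n'-1) := Nat.pow_le_pow_right (by norm_num) (by omega)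
      omega
    · exact heq
    · exfalso
      have : (2:ℕ) ^ n' ≤ 2 ^ (n-1) := Nat.pow_le_pow_right (by norm_num) (by omega)
      omega
  subst hnn
  have heq : 2 ^ j₂ + 2 ^ k₁ = 2 ^ k₂ + 2 ^ j₁ := by omega
  obtain ⟨e1, e2⟩ := pow_inj_aux hj hk heq
  exact ⟨rfl, e1, e2⟩

def gmap (p : {p : ℕ × ℕ × ℕ // p.2.1 < p.2.2 ∧ p.2.2 < p.1}) :
    {m : ℕ // 0 < m ∧ occCount m = 1} :=
  ⟨2 ^ p.1.1 - 2 ^ p.1.2.2 + 2 ^ p.1.2.1 - 1,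
   form_pos p.2.1 p.2.2, occ_form p.2.1 p.2.2⟩

theorem stmt_18 :
    (∑' m : {m : ℕ // 0 < m ∧ occCount m = 1}, (1 : ℝ) / (m : ℕ)) =
      ∑' p : {p : ℕ × ℕ × ℕ // p.2.1 < p.2.2 ∧ p.2.2 < p.1},
        (1 : ℝ) / ((2 : ℝ) ^ p.1.1 - 2 ^ p.1.2.2 + 2 ^ p.1.2.1 - 1) := by
  set T := {p : ℕ × ℕ × ℕ // p.2.1 < p.2.2 ∧ p.2.2 < p.1}
  set S := {m : ℕ // 0 < m ∧ occCount m = 1}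
  have hg : ∀ p : T, (gmap p : ℕ) = 2 ^ p.1.1 - 2 ^ p.1.2.2 + 2 ^ p.1.2.1 - 1 :=
    fun p => rfl
  have hbij : Function.Bijective gmap := by
    constructor
    · rintro ⟨⟨n, j₁, j₂⟩, hj, hjn⟩ ⟨⟨n', k₁, k₂⟩, hk, hkn⟩ hEq
      have := congrArg (Subtype.val) hEq
      simp only [hg] at this
      obtain ⟨e0, e1, e2⟩ := form_inj hj hjn hk hkn this
      apply Subtype.ext
      simp only [Prod.ext_iff]
      exact ⟨e0, e1, e2⟩
    · rintro ⟨m, hm, hocc⟩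
      obtain ⟨n, j₁, j₂, h1, h2, hf⟩ := occ_one hocc
      exact ⟨⟨⟨n, j₁, j₂⟩, h1, h2⟩, by simp [Subtype.ext_iff, hg, hf]⟩
  rw [← (Equiv.ofBijective gmap hbij).tsum_eq (fun m : S => (1 : ℝ) / (m : ℕ))]
  apply tsum_congr
  rintro ⟨⟨n, j₁, j₂⟩, h1, h2⟩
  have hval : ((Equiv.ofBijective gmap hbij ⟨⟨n, j₁, j₂⟩, h1, h2⟩ : S) : ℕ)
      = 2 ^ n - 2 ^ j₂ + 2 ^ j₁ - 1 := rfl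
  simp only [hval]
  have hC : 1 ≤ (2:ℕ) ^ j₁ := Nat.one_le_two_pow
  have hCB : (2:ℕ) ^ j₁ < 2 ^ j₂ := Nat.pow_lt_pow_right (by norm_num) h1
  have hBA : (2:ℕ) ^ j₂ < 2 ^ n := Nat.pow_lt_pow_right (by norm_num) h2
  congr 1
  rw [Nat.cast_sub (by omega), Nat.cast_add, Nat.cast_sub (by omega)]
  push_cast
  ring
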